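/- arXiv:1408.2887 — 6 statements merged into one kernel-verified Lean document; each statement's English description precedes it below -/
import Mathlib

section
/- Let p ≥ 2 and let μ ∈ S^{p-1}. Let f(x) = F(μᵀx) and g(x) = G(μᵀx) be integrable rotationally symmetric functions about μ on S^{p-1}. Then the spherical convolution is commutative: (f ⋆_μ g)(x) = (g ⋆_μ f)(x) for all x ∈ S^{p-1}, where (f ⋆_μ g)(x) = ∫_{S^{p-1}} F(xᵀy) G(yᵀμ) dy. -/
open MeasureTheory Set
open scoped RealInnerProductSpace

noncomputable section

/-- The unit sphere `S^{p-1} = {x ∈ ℝ^p : ‖x‖ = 1}` in `ℝ^p`. -/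
abbrev Sph (p : ℕ) : Type := Metric.sphere (0 : EuclideanSpace ℝ (Fin p)) 1

/-- The `(p-1)`-dimensional surface measure on the unit sphere `S^{p-1}`. -/
def sphMeasure (p : ℕ) : Measure (Sph p) :=
  (volume : Measure (EuclideanSpace ℝ (Fin p))).toSphere

/-- The cosine `xᵀy` of the angle between two points of the sphere. -/
def cosAngle {p : ℕ} (x y : Sph p) : ℝ :=
  ⟪(x : EuclideanSpace ℝ (Fin p)), (y : EuclideanSpace ℝ (Fin p))⟫

/-- The spherical convolution `(f ⋆_μ g)(x) = ∫_{S^{p-1}} F(xᵀy) G(yᵀμ) dy` of two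
rotationally symmetric functions `f(x) = F(μᵀx)`, `g(x) = G(μᵀx)` about the axis `μ`. -/
def sphConv {p : ℕ} (F G : ℝ → ℝ) (μ : Sph p) (x : Sph p) : ℝ :=
  ∫ y : Sph p, F (cosAngle x y) * G (cosAngle y μ) ∂(sphMeasure p)

/-!
Reflecting in the hyperplane orthogonal to `x - μ` gives a linear isometry `R` of `ℝ^p` that swaps
`x` and `μ` and is self-adjoint, being an involutive isometry. It preserves Lebesgue measure, hence
the surface measure of the sphere, so substituting `y ↦ R y` turns `F(xᵀy) G(yᵀμ)` into
`F(μᵀy) G(yᵀx)`, which is the integrand of `g ⋆_μ f` at `x`.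
-/

open scoped Pointwise

namespace LinearEquiv

lemma preimage_set_smul {R M M₂ : Type*} [Semiring R] [AddCommMonoid M] [AddCommMonoid M₂]
    [Module R M] [Module R M₂] (e : M ≃ₗ[R] M₂) (S : Set R) (A : Set M₂) :
    e ⁻¹' (S • A) = S • e ⁻¹' A := by
  simp only [← e.image_symm_eq_preimage, ← image2_smul]
  exact image_image2_distrib_right fun c v => map_smul e.symm c v

end LinearEquiv

namespace LinearIsometryEquiv

section UnitSphere

variable {E : Type*} [NormedAddCommGroup E] [NormedSpace ℝ E] [MeasurableSpace E] [BorelSpace E]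

def restrictUnitSphere (e : E ≃ₗᵢ[ℝ] E) : Metric.sphere (0 : E) 1 ≃ᵐ Metric.sphere (0 : E) 1 where
  toEquiv := e.toEquiv.subtypeEquiv fun v => by simp
  measurable_toFun := (e.continuous.measurable.comp measurable_subtype_coe).subtype_mk
  measurable_invFun := (e.symm.continuous.measurable.comp measurable_subtype_coe).subtype_mk

@[simp]
lemma coe_restrictUnitSphere (e : E ≃ₗᵢ[ℝ] E) (y : Metric.sphere (0 : E) 1) :
    (e.restrictUnitSphere y : E) = e y := rfl

lemma measurePreserving_restrictUnitSphere {μ : Measure E} (e : E ≃ₗᵢ[ℝ] E)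
    (he : MeasurePreserving e μ μ) :
    MeasurePreserving e.restrictUnitSphere μ.toSphere μ.toSphere := by
  refine ⟨e.restrictUnitSphere.measurable, Measure.ext fun s hs => ?_⟩
  have hval : ((↑) '' (e.restrictUnitSphere ⁻¹' s) : Set E) = e ⁻¹' ((↑) '' s) := by
    ext v
    constructor
    · rintro ⟨y, hy, rfl⟩
      exact ⟨_, hy, rfl⟩
    · rintro ⟨y, hy, hyv⟩
      have hv : v ∈ Metric.sphere (0 : E) 1 := by simpa [hyv] using y.2
      exact ⟨⟨v, hv⟩, by rwa [mem_preimage, show e.restrictUnitSphere ⟨v, hv⟩ = y from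
        Subtype.ext hyv.symm], rfl⟩
  rw [e.restrictUnitSphere.map_apply, Measure.toSphere_apply' _ hs,
    Measure.toSphere_apply' _ (e.restrictUnitSphere.measurable hs), hval,
    ← e.coe_toLinearEquiv, ← e.toLinearEquiv.preimage_set_smul, e.coe_toLinearEquiv,
    he.measure_preimage_emb e.toHomeomorph.measurableEmbedding]

end UnitSphere

lemma inner_map_left_of_involutive {E : Type*} [NormedAddCommGroup E] [InnerProductSpace ℝ E]
    (e : E ≃ₗᵢ[ℝ] E) (he : Function.Involutive e) (u v : E) : ⟪e u, v⟫ = ⟪u, e v⟫ := by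
  conv_rhs => rw [← e.inner_map_map, he]

end LinearIsometryEquiv

theorem integral_toSphere_comp_inner_swap {E G : Type*} [NormedAddCommGroup E]
    [InnerProductSpace ℝ E] [FiniteDimensional ℝ E] [MeasurableSpace E] [BorelSpace E]
    [NormedAddCommGroup G] [NormedSpace ℝ G] (x z : Metric.sphere (0 : E) 1) (H : ℝ → ℝ → G) :
    ∫ y, H ⟪(x : E), y⟫ ⟪(y : E), z⟫ ∂(volume : Measure E).toSphere =
      ∫ y, H ⟪(y : E), z⟫ ⟪(x : E), y⟫ ∂(volume : Measure E).toSphere := by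
  set R := (ℝ ∙ ((x : E) - z))ᗮ.reflection
  have hRx : R x = z := Submodule.reflection_sub (by simp)
  have hRz : R z = x := by rw [← hRx, Submodule.reflection_reflection]
  have hR := R.inner_map_left_of_involutive (Submodule.reflection_involutive _)
  rw [← (R.measurePreserving_restrictUnitSphere R.measurePreserving).integral_comp
    R.restrictUnitSphere.measurableEmbedding]
  congr 1 with y
  rw [LinearIsometryEquiv.coe_restrictUnitSphere, ← hR, hRx, hR, hRz, real_inner_comm (z : E),
    real_inner_comm (x : E)]

theorem stmt_1_general {p : ℕ} (μ : Sph p) (F G : ℝ → ℝ) :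
    ∀ x : Sph p, sphConv F G μ x = sphConv G F μ x := fun x => by
  simpa only [sphConv, sphMeasure, cosAngle, mul_comm (G _)] using
    integral_toSphere_comp_inner_swap x μ fun a b => F a * G b

/-- commutativity of the spherical convolution of two integrable rotationally
symmetric (about the same axis `μ`) functions on `S^{p-1}`:
`(f ⋆_μ g)(x) = (g ⋆_μ f)(x)` for all `x ∈ S^{p-1}`. -/
theorem stmt_1 {p : ℕ} (hp : 2 ≤ p) (μ : Sph p) (F G : ℝ → ℝ)
    (hF : Integrable (fun x : Sph p => F (cosAngle μ x)) (sphMeasure p))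
    (hG : Integrable (fun x : Sph p => G (cosAngle μ x)) (sphMeasure p)) :
    ∀ x : Sph p, sphConv F G μ x = sphConv G F μ x :=
  stmt_1_general μ F G
end
end

section
/- Let p ≥ 2, μ ∈ S^{p-1}, and let f(x) = F(μᵀx) and g(x) = G(μᵀx) be pdfs on S^{p-1}, rotationally symmetric about the same μ, absolutely continuous and unimodal with mode μ, i.e. F and G are continuous strictly increasing nonnegative functions on [−1,1]. Then the convolved pdf f ⋆_μ g, which is rotationally symmetric about μ, is also unimodal with mode μ: writing (f ⋆_μ g)(x) = H(μᵀx), the function H is strictly increasing on [−1,1], so the maximum of f ⋆_μ g on S^{p-1} is attained exactly at x = μ. -/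
open MeasureTheory Set
open scoped RealInnerProductSpace

noncomputable section

/-- `F : [-1,1] → ℝ` is the profile of a rotationally symmetric probability density
function `x ↦ F(μᵀx)` on `S^{p-1}`: it is nonnegative and the corresponding rotationally
symmetric function is integrable with total integral `1` (about any axis). -/
def IsPdfProfile (p : ℕ) (F : ℝ → ℝ) : Prop :=
  (∀ t ∈ Icc (-1 : ℝ) 1, 0 ≤ F t) ∧
  ∀ μ : Sph p, Integrable (fun x : Sph p => F (cosAngle μ x)) (sphMeasure p) ∧
    ∫ x : Sph p, F (cosAngle μ x) ∂(sphMeasure p) = 1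

/-!
The convolution depends on `x` only through `μᵀx`: if `μᵀx = μᵀy`, the reflection in the hyperplane
orthogonal to `x - y` exchanges `x` and `y`, fixes `μ` and preserves the surface measure.

For `μᵀx₁ < μᵀx₂`, let `R` be the reflection in the hyperplane orthogonal to `v = x₂ - x₁`, which
exchanges `x₁` and `x₂`. Averaging the integral for the difference with its image under `R` gives
`2 ((f ⋆ g)(x₂) - (f ⋆ g)(x₁)) = ∫ (F(x₂ᵀy) - F(x₁ᵀy)) (G(yᵀμ) - G((Ry)ᵀμ)) dy`.
Both factors have the sign of `vᵀy` (as `vᵀμ > 0`), so the integrand is continuous, nonnegative,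
and positive at `y = x₂`; since the surface measure charges every nonempty open set, the
integral is positive. For `p ≥ 2` the sphere is connected, so every `t ∈ [-1, 1]` is some `μᵀx`.
-/

open Metric Submodule

namespace LinearIsometryEquiv

variable {E : Type*} [NormedAddCommGroup E] [NormedSpace ℝ E]

def restrictSphere (R : E ≃ₗᵢ[ℝ] E) : sphere (0 : E) 1 ≃ₜ sphere (0 : E) 1 :=
  R.toHomeomorph.subtype fun x => by simp

@[simp]
lemma coe_restrictSphere (R : E ≃ₗᵢ[ℝ] E) (x : sphere (0 : E) 1) :
    (R.restrictSphere x : E) = R x :=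
  rfl

open scoped Pointwise in
lemma preimage_Ioo_smul_image_coe (R : E ≃ₗᵢ[ℝ] E) (s : Set (sphere (0 : E) 1)) :
    R ⁻¹' (Ioo (0 : ℝ) 1 • ((↑) '' s)) = Ioo (0 : ℝ) 1 • ((↑) '' (R.restrictSphere ⁻¹' s)) := by
  rw [← R.restrictSphere.image_symm, image_image]
  conv_lhs => rw [← R.symm_symm, ← R.symm.image_eq_preimage_symm]
  rw [← image2_smul, ← image2_smul, image_image2_distrib_right fun a b => R.symm.map_smul a b,
    image_image]
  rfl

lemma measurePreserving_restrictSphere [MeasurableSpace E] [BorelSpace E] {μ : Measure E}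
    (R : E ≃ₗᵢ[ℝ] E) (hR : MeasurePreserving R μ μ) :
    MeasurePreserving R.restrictSphere μ.toSphere μ.toSphere := by
  refine ⟨R.restrictSphere.continuous.measurable, Measure.ext fun s hs => ?_⟩
  have hs' : MeasurableSet (R.restrictSphere ⁻¹' s) := R.restrictSphere.continuous.measurable hs
  rw [Measure.map_apply R.restrictSphere.continuous.measurable hs, Measure.toSphere_apply' _ hs,
    Measure.toSphere_apply' _ hs', ← preimage_Ioo_smul_image_coe]
  exact congrArg _ (hR.measure_preimage_equiv (f := R.toHomeomorph.toMeasurableEquiv) _)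

end LinearIsometryEquiv

lemma inner_reflection_orthogonal_singleton {E : Type*} [NormedAddCommGroup E]
    [InnerProductSpace ℝ E] (v y w : E) :
    ⟪reflection (ℝ ∙ v)ᗮ y, w⟫ = ⟪y, w⟫ - 2 * ⟪v, y⟫ / ‖v‖ ^ 2 * ⟪v, w⟫ := by
  rw [reflection_orthogonal_apply, reflection_singleton_apply]
  simp only [inner_neg_left, inner_sub_left, two_smul, inner_add_left, real_inner_smul_left,
    RCLike.ofReal_real_eq_id, id_eq]
  ring

lemma StrictMonoOn.sub_mul_sub_pos {S : Set ℝ} {F G : ℝ → ℝ} (hF : StrictMonoOn F S)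
    (hG : StrictMonoOn G S) {a b c d κ : ℝ} (ha : a ∈ S) (hb : b ∈ S) (hc : c ∈ S) (hd : d ∈ S)
    (hκ : 0 < κ) (hdc : d - c = κ * (b - a)) (hab : a < b) :
    0 < (F b - F a) * (G d - G c) := by
  have hcd : c < d := by nlinarith
  exact mul_pos (sub_pos.2 (hF ha hb hab)) (sub_pos.2 (hG hc hd hcd))

lemma StrictMonoOn.sub_mul_sub_nonneg {S : Set ℝ} {F G : ℝ → ℝ} (hF : StrictMonoOn F S)
    (hG : StrictMonoOn G S) {a b c d κ : ℝ} (ha : a ∈ S) (hb : b ∈ S) (hc : c ∈ S) (hd : d ∈ S)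
    (hκ : 0 < κ) (hdc : d - c = κ * (b - a)) :
    0 ≤ (F b - F a) * (G d - G c) := by
  rcases lt_trichotomy a b with hab | rfl | hba
  · exact (hF.sub_mul_sub_pos hG ha hb hc hd hκ hdc hab).le
  · simp
  · have := hF.sub_mul_sub_pos hG hb ha hd hc hκ (by linarith) hba
    nlinarith

section SphConv

variable {p : ℕ}

local notation "E" => EuclideanSpace ℝ (Fin p)

instance : IsFiniteMeasure (sphMeasure p) := by
  unfold sphMeasure; infer_instance

instance : (sphMeasure p).IsOpenPosMeasure := by
  unfold sphMeasure; infer_instance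

lemma integral_sphMeasure_comp_restrictSphere (R : E ≃ₗᵢ[ℝ] E) (f : Sph p → ℝ) :
    ∫ y, f (R.restrictSphere y) ∂sphMeasure p = ∫ y, f y ∂sphMeasure p :=
  (R.measurePreserving_restrictSphere R.measurePreserving).integral_comp'
    (f := R.restrictSphere.toMeasurableEquiv) f

lemma Continuous.integrable_sphMeasure {f : Sph p → ℝ} (hf : Continuous f) :
    Integrable f (sphMeasure p) :=
  hf.integrable_of_hasCompactSupport (.of_compactSpace f)

lemma cosAngle_self (x : Sph p) : cosAngle x x = 1 := by
  simp [cosAngle]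

lemma cosAngle_mem_Icc (x y : Sph p) : cosAngle x y ∈ Icc (-1 : ℝ) 1 := by
  refine abs_le.1 ((abs_real_inner_le_norm (x : E) y).trans ?_)
  simp

lemma cosAngle_lt_one {x y : Sph p} (h : x ≠ y) : cosAngle x y < 1 :=
  (cosAngle_mem_Icc x y).2.lt_of_ne fun h' =>
    h (Subtype.ext ((inner_eq_one_iff_of_norm_eq_one (by simp) (by simp)).1 h'))

@[simp]
lemma cosAngle_restrictSphere (R : E ≃ₗᵢ[ℝ] E) (x y : Sph p) :
    cosAngle (R.restrictSphere x) (R.restrictSphere y) = cosAngle x y :=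
  R.inner_map_map x y

lemma ContinuousOn.continuous_comp_cosAngle {X : Type*} [TopologicalSpace X] {F : ℝ → ℝ}
    (hF : ContinuousOn F (Icc (-1) 1)) {f g : X → Sph p} (hf : Continuous f) (hg : Continuous g) :
    Continuous fun z => F (cosAngle (f z) (g z)) :=
  hF.comp_continuous ((continuous_subtype_val.comp hf).inner (continuous_subtype_val.comp hg))
    fun _ => cosAngle_mem_Icc _ _

lemma exists_cosAngle_eq (hp : 2 ≤ p) (μ : Sph p) {t : ℝ} (ht : t ∈ Icc (-1 : ℝ) 1) :
    ∃ x : Sph p, cosAngle μ x = t := by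
  have hrank : 1 < Module.rank ℝ E := by
    rw [← Module.finrank_eq_rank, finrank_euclideanSpace_fin]
    exact_mod_cast hp
  obtain ⟨z, hz, rfl⟩ := (isConnected_sphere hrank 0 zero_le_one).isPreconnected.intermediate_value
    (a := -(μ : E)) (b := μ) (f := fun z => ⟪(μ : E), z⟫) (by simp) μ.2
    (continuous_const.inner continuous_id).continuousOn
    (by simpa [real_inner_self_eq_norm_sq] using ht)
  exact ⟨⟨z, hz⟩, rfl⟩

lemma restrictSphere_reflection_sub (x y : Sph p) :
    (reflection (ℝ ∙ ((x : E) - y))ᗮ).restrictSphere x = y :=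
  Subtype.ext (reflection_sub (by simp))

variable {F G : ℝ → ℝ}

lemma sphConv_restrictSphere {μ : Sph p} {R : E ≃ₗᵢ[ℝ] E} (hR : R μ = μ)
    (x : Sph p) : sphConv F G μ (R.restrictSphere x) = sphConv F G μ x := by
  have hRμ : R.restrictSphere μ = μ := Subtype.ext hR
  unfold sphConv
  rw [← integral_sphMeasure_comp_restrictSphere R]
  congr with y
  rw [cosAngle_restrictSphere, ← cosAngle_restrictSphere R y μ, hRμ]

lemma sphConv_eq_of_cosAngle_eq {μ x y : Sph p}
    (h : cosAngle μ x = cosAngle μ y) : sphConv F G μ x = sphConv F G μ y := by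
  have hμ : (μ : E) ∈ (ℝ ∙ ((x : E) - y))ᗮ := by
    rw [mem_orthogonal_singleton_iff_inner_left, inner_sub_right]
    exact sub_eq_zero.2 h
  rw [← restrictSphere_reflection_sub x y, sphConv_restrictSphere (reflection_mem_subspace_eq_self hμ)]

lemma continuous_sphConv_integrand (hFc : ContinuousOn F (Icc (-1) 1))
    (hGc : ContinuousOn G (Icc (-1) 1)) (μ x : Sph p) :
    Continuous fun y => F (cosAngle x y) * G (cosAngle y μ) :=
  (hFc.continuous_comp_cosAngle continuous_const continuous_id).mul
    (hGc.continuous_comp_cosAngle continuous_id continuous_const)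

lemma two_mul_sphConv_sub_eq_integral (hFc : ContinuousOn F (Icc (-1) 1))
    (hGc : ContinuousOn G (Icc (-1) 1)) (μ : Sph p) {x₁ x₂ : Sph p} {R : E ≃ₗᵢ[ℝ] E}
    (hR₁ : R.restrictSphere x₁ = x₂) (hR₂ : R.restrictSphere x₂ = x₁) :
    2 * (sphConv F G μ x₂ - sphConv F G μ x₁) =
      ∫ y, (F (cosAngle x₂ y) - F (cosAngle x₁ y)) *
        (G (cosAngle y μ) - G (cosAngle (R.restrictSphere y) μ)) ∂sphMeasure p := by
  set A : Sph p → ℝ := fun y => F (cosAngle x₂ y) * G (cosAngle y μ) -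
    F (cosAngle x₁ y) * G (cosAngle y μ)
  have hA : Continuous A :=
    (continuous_sphConv_integrand hFc hGc μ x₂).sub (continuous_sphConv_integrand hFc hGc μ x₁)
  have hconv : sphConv F G μ x₂ - sphConv F G μ x₁ = ∫ y, A y ∂sphMeasure p :=
    (integral_sub (continuous_sphConv_integrand hFc hGc μ x₂).integrable_sphMeasure
      (continuous_sphConv_integrand hFc hGc μ x₁).integrable_sphMeasure).symm
  have h₁ (y : Sph p) : cosAngle x₁ (R.restrictSphere y) = cosAngle x₂ y := by
    rw [← hR₂, cosAngle_restrictSphere]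
  have h₂ (y : Sph p) : cosAngle x₂ (R.restrictSphere y) = cosAngle x₁ y := by
    rw [← hR₁, cosAngle_restrictSphere]
  calc 2 * (sphConv F G μ x₂ - sphConv F G μ x₁)
      = ∫ y, A y ∂sphMeasure p + ∫ y, A (R.restrictSphere y) ∂sphMeasure p := by
        rw [integral_sphMeasure_comp_restrictSphere, hconv, two_mul]
    _ = ∫ y, (A y + A (R.restrictSphere y)) ∂sphMeasure p :=
        (integral_add hA.integrable_sphMeasure
          (hA.comp R.restrictSphere.continuous).integrable_sphMeasure).symm
    _ = _ := by
        congr with y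
        simp only [A, h₁, h₂]
        ring

theorem sphConv_lt_sphConv_of_cosAngle_lt (hFc : ContinuousOn F (Icc (-1) 1))
    (hGc : ContinuousOn G (Icc (-1) 1)) (hFm : StrictMonoOn F (Icc (-1) 1))
    (hGm : StrictMonoOn G (Icc (-1) 1)) {μ x₁ x₂ : Sph p} (h : cosAngle μ x₁ < cosAngle μ x₂) :
    sphConv F G μ x₁ < sphConv F G μ x₂ := by
  have hne : x₁ ≠ x₂ := ne_of_apply_ne (cosAngle μ) h.ne
  set v : E := x₂ - x₁
  set R : E ≃ₗᵢ[ℝ] E := reflection (ℝ ∙ v)ᗮ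
  have hR₂ : R.restrictSphere x₂ = x₁ := restrictSphere_reflection_sub x₂ x₁
  have hR₁ : R.restrictSphere x₁ = x₂ := by
    rw [← hR₂]
    exact Subtype.ext (reflection_reflection _ _)
  set κ := 2 * ⟪v, (μ : E)⟫ / ‖v‖ ^ 2
  have hκ : 0 < κ := by
    have : 0 < ⟪v, (μ : E)⟫ := by
      rw [real_inner_comm, inner_sub_right]
      exact sub_pos.2 h
    have : v ≠ 0 := sub_ne_zero.2 (Subtype.coe_injective.ne hne.symm)
    positivity
  have hdiff (y : Sph p) : cosAngle y μ - cosAngle (R.restrictSphere y) μ =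
      κ * (cosAngle x₂ y - cosAngle x₁ y) := by
    simp only [cosAngle, LinearIsometryEquiv.coe_restrictSphere, R,
      inner_reflection_orthogonal_singleton, ← inner_sub_left, v]
    ring
  set Φ : Sph p → ℝ := fun y => (F (cosAngle x₂ y) - F (cosAngle x₁ y)) *
    (G (cosAngle y μ) - G (cosAngle (R.restrictSphere y) μ))
  have hΦ : Continuous Φ :=
    ((hFc.continuous_comp_cosAngle continuous_const continuous_id).sub
      (hFc.continuous_comp_cosAngle continuous_const continuous_id)).mul
    ((hGc.continuous_comp_cosAngle continuous_id continuous_const).sub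
      (hGc.continuous_comp_cosAngle R.restrictSphere.continuous continuous_const))
  have hI := cosAngle_mem_Icc (p := p)
  have hΦ_nonneg : 0 ≤ Φ := fun y =>
    hFm.sub_mul_sub_nonneg hGm (hI _ _) (hI _ _) (hI _ _) (hI _ _) hκ (hdiff y)
  have hΦ_pos : 0 < Φ x₂ :=
    hFm.sub_mul_sub_pos hGm (hI _ _) (hI _ _) (hI _ _) (hI _ _) hκ (hdiff x₂)
      ((cosAngle_lt_one hne).trans_eq (cosAngle_self x₂).symm)
  have hint := hΦ.integral_pos_of_hasCompactSupport_nonneg_nonzero (μ := sphMeasure p)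
    (.of_compactSpace Φ) hΦ_nonneg hΦ_pos.ne'
  rw [← two_mul_sphConv_sub_eq_integral hFc hGc μ hR₁ hR₂] at hint
  linarith

end SphConv

theorem stmt_3_general {p : ℕ} (hp : 2 ≤ p) (μ : Sph p) (F G : ℝ → ℝ)
    (hFc : ContinuousOn F (Icc (-1 : ℝ) 1)) (hGc : ContinuousOn G (Icc (-1 : ℝ) 1))
    (hFm : StrictMonoOn F (Icc (-1 : ℝ) 1)) (hGm : StrictMonoOn G (Icc (-1 : ℝ) 1)) :
    ∃ H : ℝ → ℝ, (∀ x : Sph p, sphConv F G μ x = H (cosAngle μ x)) ∧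
      StrictMonoOn H (Icc (-1 : ℝ) 1) ∧
      ∀ x : Sph p, x ≠ μ → sphConv F G μ x < sphConv F G μ μ := by
  have hlt {x₁ x₂ : Sph p} : cosAngle μ x₁ < cosAngle μ x₂ → sphConv F G μ x₁ < sphConv F G μ x₂ :=
    sphConv_lt_sphConv_of_cosAngle_lt hFc hGc hFm hGm
  have : Nonempty (Sph p) := ⟨μ⟩
  refine ⟨fun t => sphConv F G μ (Function.invFun (cosAngle μ) t), fun x => ?_, ?_, fun x hx => ?_⟩
  · exact sphConv_eq_of_cosAngle_eq (Function.invFun_eq ⟨x, rfl⟩).symm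
  · intro t₁ ht₁ t₂ ht₂ ht
    apply hlt
    rwa [Function.invFun_eq (exists_cosAngle_eq hp μ ht₁),
      Function.invFun_eq (exists_cosAngle_eq hp μ ht₂)]
  · exact hlt ((cosAngle_lt_one hx.symm).trans_eq (cosAngle_self μ).symm)

/-- unimodality of the spherical convolution. If `f(x) = F(μᵀx)` and
`g(x) = G(μᵀx)` are absolutely continuous unimodal rotationally symmetric pdfs on
`S^{p-1}` with common mode `μ` (i.e. `F` and `G` are continuous, strictly increasing and
nonnegative on `[-1,1]`), then the convolved pdf `f ⋆_μ g`, written as `H(μᵀx)`, is also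
unimodal with mode `μ`: `H` is strictly increasing on `[-1,1]`, and the maximum of
`f ⋆_μ g` on `S^{p-1}` is attained exactly at `x = μ`. -/
theorem stmt_3 {p : ℕ} (hp : 2 ≤ p) (μ : Sph p) (F G : ℝ → ℝ)
    (hFpdf : IsPdfProfile p F) (hGpdf : IsPdfProfile p G)
    (hFc : ContinuousOn F (Icc (-1 : ℝ) 1)) (hGc : ContinuousOn G (Icc (-1 : ℝ) 1))
    (hFm : StrictMonoOn F (Icc (-1 : ℝ) 1)) (hGm : StrictMonoOn G (Icc (-1 : ℝ) 1)) :
    ∃ H : ℝ → ℝ, (∀ x : Sph p, sphConv F G μ x = H (cosAngle μ x)) ∧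
      StrictMonoOn H (Icc (-1 : ℝ) 1) ∧
      ∀ x : Sph p, x ≠ μ → sphConv F G μ x < sphConv F G μ μ :=
  stmt_3_general hp μ F G hFc hGc hFm hGm
end
end

section
/- Consider an isotropic n-step random walk on S^{p-1} with deterministic initial direction x₀ = μ and conditional step pdfs f(x_k | x_{k−1}) = g_{k,k−1}(x_{k−1}ᵀx_k). Let ρ_{k,k−1} = ∫_{S^{p-1}} (μᵀy) g_{k,k−1}(μᵀy) dy be the mean resultant length of the k-th step distribution. Then for all n ≥ 1, the mean of x_n is E[x_n] = (∏_{k=1}^n ρ_{k,k−1}) μ. -/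
/-!
If `x` has density `F(νᵀx)` on the sphere, its mean is fixed by the reflection in the line `ℝν`,
so it is a multiple of `ν`; pairing with `ν` shows that the multiple is the mean resultant
length `ρ`, and `ρ` does not depend on the axis `ν` because the reflection exchanging two points
of the sphere preserves the surface measure. Consequently one step of the walk, started from a
density `w`, has mean `ρ • ∫ w(y) y dy` (Fubini), and the product formula follows by induction.
-/

open MeasureTheory Set
open scoped RealInnerProductSpace

noncomputable section

/-- The marginal probability density (w.r.t. the surface measure) of the `n`-th position
`x_n` of the isotropic random walk on `S^{p-1}` started at the deterministic direction
`x₀ = μ`, whose `k`-th step has conditional pdf `f(x_k | x_{k-1}) = g k (x_{k-1}ᵀ x_k)`,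
the steps being generated independently (Chapman–Kolmogorov recursion). -/
def walkPdf {p : ℕ} (μ : Sph p) (g : ℕ → ℝ → ℝ) : ℕ → Sph p → ℝ
  | 0 => fun _ => 0
  | 1 => fun x => g 1 (cosAngle μ x)
  | (n + 2) => fun x =>
      ∫ y : Sph p, g (n + 2) (cosAngle y x) * walkPdf μ g (n + 1) y ∂(sphMeasure p)

open Metric
open scoped Pointwise

lemma LinearEquiv.preimage_set_smul_s5 {R M N : Type*} [Semiring R] [AddCommMonoid M]
    [AddCommMonoid N] [Module R M] [Module R N] (f : M ≃ₗ[R] N) (t : Set R) (A : Set N) :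
    f ⁻¹' (t • A) = t • f ⁻¹' A := by
  ext x
  simp only [mem_smul, mem_preimage]
  constructor
  · rintro ⟨c, hc, y, hy, hyx⟩
    exact ⟨c, hc, f.symm y, by simpa using hy, by rw [← f.symm.map_smul, hyx, f.symm_apply_apply]⟩
  · rintro ⟨c, hc, y, hy, rfl⟩
    exact ⟨c, hc, f y, hy, (f.map_smul c y).symm⟩

namespace LinearIsometryEquiv

variable {E : Type*} [NormedAddCommGroup E] [NormedSpace ℝ E]
variable [MeasurableSpace E] [BorelSpace E]

def sphereEquiv (f : E ≃ₗᵢ[ℝ] E) : sphere (0 : E) 1 ≃ᵐ sphere (0 : E) 1 :=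
  (f.toHomeomorph.subtype fun x => by simp).toMeasurableEquiv

@[simp] lemma coe_sphereEquiv (f : E ≃ₗᵢ[ℝ] E) (x : sphere (0 : E) 1) :
    (f.sphereEquiv x : E) = f x := rfl

lemma image_coe_preimage_sphereEquiv (f : E ≃ₗᵢ[ℝ] E) (s : Set (sphere (0 : E) 1)) :
    ((↑) '' (f.sphereEquiv ⁻¹' s) : Set E) = f ⁻¹' ((↑) '' s) := by
  ext x
  constructor
  · rintro ⟨y, hy, rfl⟩
    exact ⟨_, hy, rfl⟩
  · rintro ⟨y, hy, hxy⟩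
    refine ⟨⟨x, by
      rw [mem_sphere_zero_iff_norm, ← f.norm_map, ← hxy, norm_eq_of_mem_sphere]⟩, ?_, rfl⟩
    rwa [mem_preimage, show f.sphereEquiv ⟨x, _⟩ = y from Subtype.ext hxy.symm]

lemma measurePreserving_sphereEquiv {μ : Measure E} (f : E ≃ₗᵢ[ℝ] E)
    (hf : MeasurePreserving f μ μ) :
    MeasurePreserving f.sphereEquiv μ.toSphere μ.toSphere := by
  refine ⟨f.sphereEquiv.measurable, Measure.ext fun s hs => ?_⟩
  rw [Measure.map_apply f.sphereEquiv.measurable hs, Measure.toSphere_apply' _ hs,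
    Measure.toSphere_apply' _ (f.sphereEquiv.measurable hs), image_coe_preimage_sphereEquiv,
    ← f.coe_toLinearEquiv, ← f.toLinearEquiv.preimage_set_smul_s5, f.coe_toLinearEquiv,
    hf.measure_preimage_emb f.toHomeomorph.measurableEmbedding]

end LinearIsometryEquiv

variable {p : ℕ}

local notation "𝔼" => EuclideanSpace ℝ (Fin p)

instance inst_s5 : IsFiniteMeasure (sphMeasure p) := by
  unfold sphMeasure; infer_instance

lemma measurePreserving_sphMeasure (f : 𝔼 ≃ₗᵢ[ℝ] 𝔼) :
    MeasurePreserving f.sphereEquiv (sphMeasure p) (sphMeasure p) :=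
  f.measurePreserving_sphereEquiv f.measurePreserving

lemma cosAngle_sphereEquiv (f : 𝔼 ≃ₗᵢ[ℝ] 𝔼) (x y : Sph p) :
    cosAngle (f.sphereEquiv x) (f.sphereEquiv y) = cosAngle x y :=
  f.inner_map_map x y

def swapReflection (μ ν : Sph p) : 𝔼 ≃ₗᵢ[ℝ] 𝔼 :=
  (ℝ ∙ ((μ : 𝔼) - ν))ᗮ.reflection

lemma swapReflection_apply_left (μ ν : Sph p) : swapReflection μ ν μ = ν :=
  Submodule.reflection_sub (by rw [norm_eq_of_mem_sphere, norm_eq_of_mem_sphere])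

lemma swapReflection_apply_right (μ ν : Sph p) : swapReflection μ ν ν = μ :=
  calc swapReflection μ ν ν = swapReflection μ ν (swapReflection μ ν μ) := by
        rw [swapReflection_apply_left]
    _ = μ := Submodule.reflection_reflection _ _

lemma cosAngle_swapReflection (μ ν x : Sph p) :
    cosAngle μ ((swapReflection μ ν).sphereEquiv x) = cosAngle ν x := by
  rw [← cosAngle_sphereEquiv (swapReflection μ ν) ν]
  congr 1
  exact Subtype.ext (swapReflection_apply_right μ ν).symm

/-- Also valid for `μ = ν`: then `(ℝ ∙ 0)ᗮ = ⊤` and the coefficient is `_ / 0 = 0`. -/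
lemma swapReflection_apply (μ ν : Sph p) (x : 𝔼) :
    swapReflection μ ν x
      = x - (2 * (⟪(μ : 𝔼) - ν, x⟫ / ‖(μ : 𝔼) - ν‖ ^ 2)) • ((μ : 𝔼) - ν) := by
  rw [swapReflection, Submodule.reflection_orthogonal, LinearIsometryEquiv.trans_apply,
    Submodule.reflection_singleton_apply]
  simp only [LinearIsometryEquiv.coe_neg, Real.ringHom_apply]
  module

lemma measurable_swapReflection (μ : Sph p) :
    Measurable fun z : Sph p × Sph p => (swapReflection μ z.1).sphereEquiv z.2 := by
  refine Measurable.subtype_mk ?_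
  show Measurable fun z : Sph p × Sph p => swapReflection μ z.1 z.2
  simp only [swapReflection_apply]
  fun_prop

section Invariance

variable {F : Type*} [NormedAddCommGroup F]

lemma integral_comp_cosAngle [NormedSpace ℝ F] (G : ℝ → F) (μ ν : Sph p) :
    ∫ x, G (cosAngle μ x) ∂sphMeasure p = ∫ x, G (cosAngle ν x) ∂sphMeasure p :=
  calc ∫ x, G (cosAngle μ x) ∂sphMeasure p
      = ∫ x, G (cosAngle μ ((swapReflection μ ν).sphereEquiv x)) ∂sphMeasure p :=
        ((measurePreserving_sphMeasure _).integral_comp' (fun x => G (cosAngle μ x))).symm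
    _ = ∫ x, G (cosAngle ν x) ∂sphMeasure p := by simp only [cosAngle_swapReflection]

lemma integrable_comp_cosAngle_iff {G : ℝ → F} (μ ν : Sph p) :
    Integrable (fun x => G (cosAngle μ x)) (sphMeasure p) ↔
      Integrable (fun x => G (cosAngle ν x)) (sphMeasure p) := by
  rw [← (measurePreserving_sphMeasure (swapReflection μ ν)).integrable_comp_emb
    (swapReflection μ ν).sphereEquiv.measurableEmbedding]
  simp only [Function.comp_def, cosAngle_swapReflection]

end Invariance

def meanResultantLength (F : ℝ → ℝ) (μ : Sph p) : ℝ :=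
  ∫ x, cosAngle μ x * F (cosAngle μ x) ∂sphMeasure p

lemma meanResultantLength_eq (F : ℝ → ℝ) (μ ν : Sph p) :
    meanResultantLength F μ = meanResultantLength F ν :=
  integral_comp_cosAngle (fun t => t * F t) μ ν

lemma MeasureTheory.Integrable.smul_coe_sph {X : Type*} [MeasurableSpace X] {m : Measure X}
    {f : X → ℝ} {φ : X → Sph p} (hf : Integrable f m) (hφ : Measurable φ) :
    Integrable (fun x => f x • (φ x : 𝔼)) m :=
  hf.smul_bdd 1 (continuous_subtype_val.measurable.comp hφ).aestronglyMeasurable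
    (ae_of_all _ fun x => (norm_eq_of_mem_sphere (φ x)).le)

lemma integral_comp_cosAngle_smul {F : ℝ → ℝ} {ν : Sph p}
    (hF : Integrable (fun x => F (cosAngle ν x)) (sphMeasure p)) :
    ∫ x, F (cosAngle ν x) • (x : 𝔼) ∂sphMeasure p = meanResultantLength F ν • (ν : 𝔼) := by
  have hinner : ⟪(ν : 𝔼), ∫ x, F (cosAngle ν x) • (x : 𝔼) ∂sphMeasure p⟫
      = meanResultantLength F ν := by
    rw [← integral_inner (hF.smul_coe_sph measurable_id')]
    simp only [real_inner_smul_right, meanResultantLength, cosAngle, mul_comm]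
  set v := ∫ x, F (cosAngle ν x) • (x : 𝔼) ∂sphMeasure p
  set R := (ℝ ∙ (ν : 𝔼)).reflection
  have hRν : R.sphereEquiv ν = ν :=
    Subtype.ext (Submodule.reflection_mem_subspace_eq_self (Submodule.mem_span_singleton_self _))
  have hcos (x : Sph p) : cosAngle ν (R.sphereEquiv x) = cosAngle ν x := by
    conv_lhs => rw [← hRν]
    exact cosAngle_sphereEquiv R ν x
  have hRv : R v = v :=
    calc R v = ∫ x, R (F (cosAngle ν x) • (x : 𝔼)) ∂sphMeasure p :=
          (R.toLinearIsometry.integral_comp_comm _).symm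
      _ = ∫ x, F (cosAngle ν (R.sphereEquiv x)) • (R.sphereEquiv x : 𝔼) ∂sphMeasure p := by
          simp only [map_smul, hcos, LinearIsometryEquiv.coe_sphereEquiv]
      _ = v :=
          (measurePreserving_sphMeasure R).integral_comp' (fun x => F (cosAngle ν x) • (x : 𝔼))
  obtain ⟨c, hc⟩ := Submodule.mem_span_singleton.mp ((Submodule.reflection_eq_self_iff v).mp hRv)
  rw [← hinner, ← hc, real_inner_smul_right, real_inner_self_eq_norm_sq, norm_eq_of_mem_sphere,
    one_pow, mul_one]

/-- `F` itself need not be measurable. The skew product `(y, x) ↦ (y, R_y x)`, where `R_y`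
exchanges `μ` and `y`, preserves the product measure and turns `F (μᵀ ·)` into `F (yᵀ ·)`. -/
lemma aestronglyMeasurable_comp_cosAngle_prod {F : ℝ → ℝ} {μ : Sph p}
    (hF : AEStronglyMeasurable (fun x => F (cosAngle μ x)) (sphMeasure p)) :
    AEStronglyMeasurable (fun z : Sph p × Sph p => F (cosAngle z.1 z.2))
      ((sphMeasure p).prod (sphMeasure p)) := by
  have hskew : MeasurePreserving
      (fun z : Sph p × Sph p => (z.1, (swapReflection μ z.1).sphereEquiv z.2))
      ((sphMeasure p).prod (sphMeasure p)) ((sphMeasure p).prod (sphMeasure p)) :=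
    (MeasurePreserving.id _).skew_product (measurable_swapReflection μ)
      (ae_of_all _ fun _ => (measurePreserving_sphMeasure _).map_eq)
  simpa only [Function.comp_def, cosAngle_swapReflection] using
    hF.comp_snd.comp_measurePreserving hskew

def stepPdf (F : ℝ → ℝ) (w : Sph p → ℝ) (x : Sph p) : ℝ :=
  ∫ y, F (cosAngle y x) * w y ∂sphMeasure p

section StepPdf

variable {F : ℝ → ℝ} {μ : Sph p} {w : Sph p → ℝ}

lemma integrable_stepPdf_integrand (hF : Integrable (fun x => F (cosAngle μ x)) (sphMeasure p))
    (hw : Integrable w (sphMeasure p)) :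
    Integrable (fun z : Sph p × Sph p => F (cosAngle z.1 z.2) * w z.1)
      ((sphMeasure p).prod (sphMeasure p)) := by
  have hmeas : AEStronglyMeasurable (fun z : Sph p × Sph p => F (cosAngle z.1 z.2) * w z.1)
      ((sphMeasure p).prod (sphMeasure p)) :=
    (aestronglyMeasurable_comp_cosAngle_prod hF.1).mul hw.1.comp_fst
  refine (integrable_prod_iff hmeas).mpr ⟨?_, ?_⟩
  · exact ae_of_all _ fun y => ((integrable_comp_cosAngle_iff μ y).mp hF).mul_const (w y)
  · have hnorm (y : Sph p) : ∫ x, ‖F (cosAngle y x) * w y‖ ∂sphMeasure p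
        = (∫ x, ‖F (cosAngle μ x)‖ ∂sphMeasure p) * ‖w y‖ := by
      simp only [norm_mul, integral_mul_const, integral_comp_cosAngle (fun t => ‖F t‖) y μ]
    simpa only [hnorm] using hw.norm.const_mul _

lemma integrable_stepPdf (hF : Integrable (fun x => F (cosAngle μ x)) (sphMeasure p))
    (hw : Integrable w (sphMeasure p)) :
    Integrable (stepPdf F w) (sphMeasure p) :=
  (integrable_stepPdf_integrand hF hw).integral_prod_right

lemma integral_stepPdf_smul (hF : Integrable (fun x => F (cosAngle μ x)) (sphMeasure p))
    (hw : Integrable w (sphMeasure p)) :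
    ∫ x, stepPdf F w x • (x : 𝔼) ∂sphMeasure p
      = meanResultantLength F μ • ∫ y, w y • (y : 𝔼) ∂sphMeasure p :=
  calc ∫ x, stepPdf F w x • (x : 𝔼) ∂sphMeasure p
      = ∫ x, ∫ y, (F (cosAngle y x) * w y) • (x : 𝔼) ∂sphMeasure p ∂sphMeasure p := by
        simp only [stepPdf, integral_smul_const]
    _ = ∫ y, ∫ x, (F (cosAngle y x) * w y) • (x : 𝔼) ∂sphMeasure p ∂sphMeasure p :=
        (integral_integral_swap
          ((integrable_stepPdf_integrand hF hw).smul_coe_sph measurable_snd)).symm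
    _ = ∫ y, meanResultantLength F μ • w y • (y : 𝔼) ∂sphMeasure p := by
        refine integral_congr_ae (ae_of_all _ fun y => ?_)
        simp_rw [mul_comm _ (w y), mul_smul]
        rw [integral_smul, integral_comp_cosAngle_smul ((integrable_comp_cosAngle_iff μ y).mp hF),
          meanResultantLength_eq F y μ, smul_comm]
    _ = meanResultantLength F μ • ∫ y, w y • (y : 𝔼) ∂sphMeasure p := integral_smul _ _

end StepPdf

lemma walkPdf_add_two (μ : Sph p) (g : ℕ → ℝ → ℝ) (n : ℕ) :
    walkPdf μ g (n + 2) = stepPdf (g (n + 2)) (walkPdf μ g (n + 1)) := rfl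

section Walk

variable {μ : Sph p} {g : ℕ → ℝ → ℝ}
  (hg : ∀ k, 1 ≤ k → Integrable (fun x => g k (cosAngle μ x)) (sphMeasure p))
include hg

lemma integrable_walkPdf {n : ℕ} (hn : 1 ≤ n) : Integrable (walkPdf μ g n) (sphMeasure p) := by
  induction n, hn using Nat.le_induction with
  | base => exact hg 1 le_rfl
  | succ n hn ih =>
    obtain ⟨m, rfl⟩ := Nat.exists_eq_add_of_le' hn
    exact integrable_stepPdf (hg (m + 2) (by omega)) ih

lemma integral_walkPdf_smul {n : ℕ} (hn : 1 ≤ n) :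
    ∫ y, walkPdf μ g n y • (y : 𝔼) ∂sphMeasure p
      = (∏ k ∈ Finset.Icc 1 n, meanResultantLength (g k) μ) • (μ : 𝔼) := by
  induction n, hn using Nat.le_induction with
  | base =>
    rw [Finset.Icc_self, Finset.prod_singleton]
    exact integral_comp_cosAngle_smul (hg 1 le_rfl)
  | succ n hn ih =>
    obtain ⟨m, rfl⟩ := Nat.exists_eq_add_of_le' hn
    rw [walkPdf_add_two, integral_stepPdf_smul (hg (m + 2) (by omega))
      (integrable_walkPdf hg hn), ih, smul_smul,
      Finset.prod_Icc_succ_top (show 1 ≤ m + 1 + 1 by omega), mul_comm]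

end Walk

theorem stmt_5_general {p : ℕ} (μ : Sph p) (g : ℕ → ℝ → ℝ)
    (hg : ∀ k : ℕ, 1 ≤ k → IsPdfProfile p (g k)) (n : ℕ) (hn : 1 ≤ n) :
    ∫ y : Sph p, walkPdf μ g n y • (y : EuclideanSpace ℝ (Fin p)) ∂(sphMeasure p) =
      (∏ k ∈ Finset.Icc 1 n,
          ∫ y : Sph p, cosAngle μ y * g k (cosAngle μ y) ∂(sphMeasure p)) •
        (μ : EuclideanSpace ℝ (Fin p)) :=
  integral_walkPdf_smul (fun k hk => ((hg k hk).2 μ).1) hn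

/-- mean of the isotropic random walk. For the isotropic `n`-step random
walk on `S^{p-1}` started at `x₀ = μ` with step profiles `g k`, the mean of `x_n` is
`E[x_n] = (∏_{k=1}^n ρ_k) μ`, where `ρ_k = ∫_{S^{p-1}} (μᵀy) g k (μᵀy) dy` is the mean
resultant length of the `k`-th step distribution. -/
theorem stmt_5 {p : ℕ} (hp : 2 ≤ p) (μ : Sph p) (g : ℕ → ℝ → ℝ)
    (hg : ∀ k : ℕ, 1 ≤ k → IsPdfProfile p (g k)) (n : ℕ) (hn : 1 ≤ n) :
    ∫ y : Sph p, walkPdf μ g n y • (y : EuclideanSpace ℝ (Fin p)) ∂(sphMeasure p) =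
      (∏ k ∈ Finset.Icc 1 n,
          ∫ y : Sph p, cosAngle μ y * g k (cosAngle μ y) ∂(sphMeasure p)) •
        (μ : EuclideanSpace ℝ (Fin p)) :=
  stmt_5_general μ g hg n hn
end
end

section
/- Let Λ be a nonnegative random variable with E[Λ^a] < ∞ for some a > 0, and let N be a Cox (mixed Poisson) count with intensity Λ, i.e. Pr(N = n) = E[e^{−Λ} Λⁿ / n!]. Then for every integer m with m > a − 1, Pr(N > m) ≤ E[Λ^a] · Γ(m − a + 1) / Γ(m + 1); consequently Pr(N > m) = O(m^{−a}) as m → ∞. -/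
open MeasureTheory Set

noncomputable section

/-- The mixed Poisson (Cox) weight `p_n = E[e^{-Λ} Λ^n / n!] = Pr(N = n)` of a Cox count
with random nonnegative intensity `Λ` on a probability space `Ω`. -/
def coxWeight {Ω : Type*} [MeasureSpace Ω] (Λ : Ω → ℝ) (n : ℕ) : ℝ :=
  ∫ ω, Real.exp (-Λ ω) * Λ ω ^ n / (n.factorial : ℝ)

/-!
Given `Λ = l`, the tail of a Poisson(`l`) count equals the incomplete gamma integral
`∫₀ˡ e^{-t} t^m / m! dt`. On `(0, l]` we have `t^m ≤ l^a t^{m-a}`, so the tail is at most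
`l^a Γ(m - a + 1) / m!`; integrating over `Λ` gives the first bound.

For the decay, log-convexity of `Γ` gives `Γ(x + b) ≤ Γ(x) x^b` for `b ∈ [0, 1]`, while
`Γ(x + k) ≥ x^k Γ(x)`; with `k = ⌈a⌉` and `x = m - k + 1` this yields
`Γ(m - a + 1) / Γ(m + 1) ≤ x^{-a} ≤ 2^a m^{-a}` once `m ≥ 2⌈a⌉`.
-/

open Real
open scoped Nat

namespace Real

theorem hasDerivAt_exp_neg_mul_sum_range_pow_div_factorial (m : ℕ) (t : ℝ) :
    HasDerivAt (fun t : ℝ => exp (-t) * ∑ k ∈ Finset.range (m + 1), t ^ k / k !)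
      (-(exp (-t) * t ^ m / m !)) t := by
  have hsum : HasDerivAt (fun t : ℝ => ∑ k ∈ Finset.range (m + 1), t ^ k / k !)
      (∑ k ∈ Finset.range m, t ^ k / k !) t := by
    have h := HasDerivAt.fun_sum (u := Finset.range (m + 1))
      fun k _ => (hasDerivAt_pow k t).div_const (k ! : ℝ)
    refine h.congr_deriv ?_
    rw [Finset.sum_range_succ']
    simp only [Nat.cast_zero, zero_mul, zero_div, add_zero, Nat.add_sub_cancel]
    refine Finset.sum_congr rfl fun k _ => ?_
    rw [Nat.factorial_succ, Nat.cast_mul, Nat.cast_succ]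
    field_simp
  have hexp : HasDerivAt (fun t : ℝ => exp (-t)) (-exp (-t)) t := by
    simpa using (hasDerivAt_neg t).exp
  refine (hexp.mul hsum).congr_deriv ?_
  rw [Finset.sum_range_succ]
  ring

theorem integral_exp_neg_mul_pow_div_factorial (m : ℕ) (l : ℝ) :
    ∫ t in (0 : ℝ)..l, exp (-t) * t ^ m / m ! =
      1 - exp (-l) * ∑ k ∈ Finset.range (m + 1), l ^ k / k ! := by
  rw [intervalIntegral.integral_eq_sub_of_hasDerivAt
      (f := fun t => -(exp (-t) * ∑ k ∈ Finset.range (m + 1), t ^ k / k !))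
      (fun t _ => by simpa using (hasDerivAt_exp_neg_mul_sum_range_pow_div_factorial m t).fun_neg)
      ((by fun_prop : Continuous _).intervalIntegrable _ _)]
  simp [Finset.sum_range_succ']
  ring

theorem tsum_exp_neg_mul_pow_div_factorial_nat_add (m : ℕ) (l : ℝ) :
    ∑' n, exp (-l) * l ^ (m + 1 + n) / (m + 1 + n)! =
      1 - exp (-l) * ∑ k ∈ Finset.range (m + 1), l ^ k / k ! := by
  have hexp := (summable_pow_div_factorial l).sum_add_tsum_nat_add (m + 1)
  rw [(NormedSpace.expSeries_div_hasSum_exp l).tsum_eq, ← exp_eq_exp_ℝ] at hexp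
  simp_rw [mul_div_assoc, tsum_mul_left, add_comm (m + 1)]
  rw [← sub_eq_of_eq_add' hexp.symm, mul_sub, ← exp_add]
  simp

theorem summable_exp_neg_mul_pow_div_factorial_nat_add (m : ℕ) (l : ℝ) :
    Summable fun n => exp (-l) * l ^ (m + 1 + n) / (m + 1 + n)! := by
  simp_rw [mul_div_assoc, add_comm (m + 1)]
  exact ((summable_nat_add_iff (m + 1)).2 (summable_pow_div_factorial l)).mul_left _

theorem pow_le_rpow_mul_rpow_sub (m : ℕ) {a t l : ℝ} (ha : 0 ≤ a) (ht : 0 < t) (htl : t ≤ l) :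
    t ^ m ≤ l ^ a * t ^ ((m : ℝ) - a) := by
  calc t ^ m = t ^ a * t ^ ((m : ℝ) - a) := by
        rw [← rpow_add ht, add_sub_cancel, rpow_natCast]
    _ ≤ l ^ a * t ^ ((m : ℝ) - a) := by gcongr

theorem tsum_exp_neg_mul_pow_div_factorial_nat_add_le (m : ℕ) {a l : ℝ} (ha : 0 ≤ a)
    (hma : a < m + 1) (hl : 0 ≤ l) :
    ∑' n, exp (-l) * l ^ (m + 1 + n) / (m + 1 + n)! ≤
      l ^ a * Gamma (m - a + 1) / Gamma (m + 1) := by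
  have hs : 0 < (m : ℝ) - a + 1 := by linarith
  have hGamma_int : IntegrableOn (fun t => exp (-t) * t ^ ((m : ℝ) - a)) (Ioi 0) := by
    simpa using GammaIntegral_convergent hs
  rw [tsum_exp_neg_mul_pow_div_factorial_nat_add, ← integral_exp_neg_mul_pow_div_factorial,
    intervalIntegral.integral_of_le hl, Gamma_nat_eq_factorial]
  calc ∫ t in Ioc 0 l, exp (-t) * t ^ m / m !
      ≤ ∫ t in Ioc 0 l, l ^ a / m ! * (exp (-t) * t ^ ((m : ℝ) - a)) := by
        refine setIntegral_mono_on (by fun_prop : Continuous _).integrableOn_Ioc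
          ((hGamma_int.mono_set Ioc_subset_Ioi_self).const_mul _) measurableSet_Ioc
          fun t ⟨ht, htl⟩ => ?_
        calc exp (-t) * t ^ m / m ! ≤ exp (-t) * (l ^ a * t ^ ((m : ℝ) - a)) / m ! := by
              gcongr
              exact pow_le_rpow_mul_rpow_sub m ha ht htl
          _ = l ^ a / m ! * (exp (-t) * t ^ ((m : ℝ) - a)) := by ring
    _ = l ^ a / m ! * ∫ t in Ioc 0 l, exp (-t) * t ^ ((m : ℝ) - a) := integral_const_mul _ _
    _ ≤ l ^ a / m ! * ∫ t in Ioi 0, exp (-t) * t ^ ((m : ℝ) - a) := by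
        gcongr
        · filter_upwards [self_mem_ae_restrict measurableSet_Ioi] with t ht
          exact mul_nonneg (exp_pos _).le (rpow_nonneg ht.le _)
        · exact Ioc_subset_Ioi_self
    _ = l ^ a * Gamma (m - a + 1) / m ! := by
        rw [Gamma_eq_integral hs]
        ring_nf

theorem Gamma_add_le_Gamma_mul_rpow {x b : ℝ} (hx : 0 < x) (hb₀ : 0 ≤ b) (hb₁ : b ≤ 1) :
    Gamma (x + b) ≤ Gamma x * x ^ b := by
  rcases hb₀.eq_or_lt with rfl | hb₀
  · simp
  rcases hb₁.eq_or_lt with rfl | hb₁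
  · rw [Gamma_add_one hx.ne', rpow_one, mul_comm]
  have hΓ := Gamma_pos_of_pos hx
  calc Gamma (x + b) = Gamma ((1 - b) * x + b * (x + 1)) := by ring_nf
    _ ≤ Gamma x ^ (1 - b) * Gamma (x + 1) ^ b :=
        Gamma_mul_add_mul_le_rpow_Gamma_mul_rpow_Gamma hx (by linarith) (by linarith) hb₀
          (by ring)
    _ = Gamma x * x ^ b := by
        rw [Gamma_add_one hx.ne', mul_rpow hx.le hΓ.le, mul_left_comm, ← rpow_add hΓ,
          sub_add_cancel, rpow_one, mul_comm]

theorem pow_mul_Gamma_le_Gamma_add_nat {x : ℝ} (hx : 0 < x) (k : ℕ) :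
    x ^ k * Gamma x ≤ Gamma (x + k) := by
  induction k with
  | zero => simp
  | succ k ih =>
    rw [Nat.cast_succ, ← add_assoc, Gamma_add_one (by positivity), pow_succ, mul_right_comm,
      mul_comm (x + k)]
    gcongr
    linarith [k.cast_nonneg (α := ℝ)]

theorem Gamma_add_nat_sub_div_Gamma_add_nat_le {x a : ℝ} (hx : 0 < x) {k : ℕ} (hak : a ≤ k)
    (hka : k ≤ a + 1) :
    Gamma (x + k - a) / Gamma (x + k) ≤ x ^ (-a) := by
  have hΓ := Gamma_pos_of_pos hx
  rw [div_le_iff₀ (Gamma_pos_of_pos (by positivity)), add_sub_assoc]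
  calc Gamma (x + (k - a)) ≤ Gamma x * x ^ ((k : ℝ) - a) :=
        Gamma_add_le_Gamma_mul_rpow hx (by linarith) (by linarith)
    _ = x ^ (-a) * (x ^ k * Gamma x) := by
        rw [← rpow_natCast, ← mul_assoc, ← rpow_add hx]
        ring_nf
    _ ≤ x ^ (-a) * Gamma (x + k) := by
        gcongr
        exact pow_mul_Gamma_le_Gamma_add_nat hx k

theorem Gamma_sub_add_one_div_Gamma_add_one_le {a : ℝ} (ha : 0 < a) {m : ℕ}
    (hm : 2 * ⌈a⌉₊ ≤ m) :
    Gamma (m - a + 1) / Gamma (m + 1) ≤ 2 ^ a * (m : ℝ) ^ (-a) := by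
  set k := ⌈a⌉₊
  have hk : (2 * k : ℝ) ≤ m := by exact_mod_cast hm
  have hm₀ : (0 : ℝ) < m := by
    have : (0 : ℝ) < k := by positivity
    linarith
  have hx : (m : ℝ) / 2 < m - k + 1 := by linarith
  calc Gamma (m - a + 1) / Gamma (m + 1)
      = Gamma ((m - k + 1) + k - a) / Gamma ((m - k + 1) + k) := by ring_nf
    _ ≤ (m - k + 1 : ℝ) ^ (-a) :=
        Gamma_add_nat_sub_div_Gamma_add_nat_le (by linarith) (Nat.le_ceil a)
          (Nat.ceil_lt_add_one ha.le).le
    _ ≤ ((m : ℝ) / 2) ^ (-a) := rpow_le_rpow_of_nonpos (by positivity) hx.le (by linarith)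
    _ = 2 ^ a * (m : ℝ) ^ (-a) := by
        rw [div_rpow hm₀.le zero_le_two, rpow_neg zero_le_two, div_eq_mul_inv, inv_inv,
          mul_comm]

end Real

namespace MeasureTheory

theorem tsum_integral_le_integral_of_tsum_le {α : Type*} [MeasurableSpace α] {μ : Measure α}
    {F : ℕ → α → ℝ} {g : α → ℝ} (hF_meas : ∀ n, AEStronglyMeasurable (F n) μ)
    (hF_nonneg : ∀ n x, 0 ≤ F n x) (hF_sum : ∀ x, Summable (F · x)) (hg : Integrable g μ)
    (hFg : ∀ x, ∑' n, F n x ≤ g x) :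
    ∑' n, ∫ x, F n x ∂μ ≤ ∫ x, g x ∂μ := by
  have hF_le_g (s : Finset ℕ) (x : α) : ∑ n ∈ s, F n x ≤ g x :=
    ((hF_sum x).sum_le_tsum s fun n _ => hF_nonneg n x).trans (hFg x)
  have hF_int (n : ℕ) : Integrable (F n) μ := by
    refine hg.mono' (hF_meas n) (ae_of_all _ fun x => ?_)
    simpa [Real.norm_of_nonneg (hF_nonneg n x)] using hF_le_g {n} x
  refine Real.tsum_le_of_sum_le (fun n => integral_nonneg (hF_nonneg n)) fun s => ?_
  rw [← integral_finsetSum s fun n _ => hF_int n]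
  exact integral_mono (integrable_finsetSum s fun n _ => hF_int n) hg (hF_le_g s)

end MeasureTheory

theorem tsum_coxWeight_le {Ω : Type*} [MeasureSpace Ω] {Λ : Ω → ℝ} (hmeas : Measurable Λ)
    (hpos : ∀ ω, 0 ≤ Λ ω) {a : ℝ} (ha : 0 ≤ a) (hmom : Integrable (fun ω => Λ ω ^ a))
    {m : ℕ} (hm : a - 1 < m) :
    ∑' n, coxWeight Λ (m + 1 + n) ≤
      (∫ ω, Λ ω ^ a) * Gamma (m - a + 1) / Gamma (m + 1) := by
  simp_rw [mul_div_assoc, ← integral_mul_const]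
  refine tsum_integral_le_integral_of_tsum_le (fun n => by fun_prop)
    (fun n ω => by have := hpos ω; positivity)
    (fun ω => summable_exp_neg_mul_pow_div_factorial_nat_add m (Λ ω)) (hmom.mul_const _)
    fun ω => ?_
  rw [← mul_div_assoc]
  exact tsum_exp_neg_mul_pow_div_factorial_nat_add_le m ha (by linarith) (hpos ω)

theorem stmt_16_general {Ω : Type*} [MeasureSpace Ω]
    (Λ : Ω → ℝ) (hmeas : Measurable Λ) (hpos : ∀ ω, 0 ≤ Λ ω)
    (a : ℝ) (ha : 0 < a) (hmom : Integrable (fun ω => Λ ω ^ a)) :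
    (∀ m : ℕ, a - 1 < (m : ℝ) →
      ∑' n : ℕ, coxWeight Λ (m + 1 + n) ≤
        (∫ ω, Λ ω ^ a) * Real.Gamma ((m : ℝ) - a + 1) / Real.Gamma ((m : ℝ) + 1)) ∧
    ∃ C > (0 : ℝ), ∃ m₀ : ℕ, ∀ m : ℕ, m₀ ≤ m →
      ∑' n : ℕ, coxWeight Λ (m + 1 + n) ≤ C * (m : ℝ) ^ (-a) := by
  have htail (m : ℕ) (hm : a - 1 < m) := tsum_coxWeight_le hmeas hpos ha.le hmom hm
  have hE : 0 ≤ ∫ ω, Λ ω ^ a := integral_nonneg fun ω => rpow_nonneg (hpos ω) a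
  refine ⟨htail, (∫ ω, Λ ω ^ a) * 2 ^ a + 1, by positivity, 2 * ⌈a⌉₊, fun m hm => ?_⟩
  have hma : a - 1 < m := by
    have : (2 * ⌈a⌉₊ : ℝ) ≤ m := by exact_mod_cast hm
    linarith [Nat.le_ceil a]
  calc ∑' n, coxWeight Λ (m + 1 + n)
      ≤ (∫ ω, Λ ω ^ a) * (Gamma (m - a + 1) / Gamma (m + 1)) := by
        rw [← mul_div_assoc]
        exact htail m hma
    _ ≤ (∫ ω, Λ ω ^ a) * (2 ^ a * (m : ℝ) ^ (-a)) := by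
        gcongr
        exact Gamma_sub_add_one_div_Gamma_add_one_le ha hm
    _ ≤ ((∫ ω, Λ ω ^ a) * 2 ^ a + 1) * (m : ℝ) ^ (-a) := by
        rw [← mul_assoc]
        gcongr
        linarith

/-- tail bound for a Cox (mixed Poisson) count. If `Λ ≥ 0` has
`E[Λ^a] < ∞` for some `a > 0` and `N` is the mixed Poisson count with intensity `Λ`,
then `Pr(N > m) ≤ E[Λ^a] Γ(m - a + 1)/Γ(m + 1)` for every integer `m > a - 1`;
consequently `Pr(N > m) = O(m^{-a})` as `m → ∞`. -/
theorem stmt_16 {Ω : Type*} [MeasureSpace Ω] [IsProbabilityMeasure (volume : Measure Ω)]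
    (Λ : Ω → ℝ) (hmeas : Measurable Λ) (hpos : ∀ ω, 0 ≤ Λ ω)
    (a : ℝ) (ha : 0 < a) (hmom : Integrable (fun ω => Λ ω ^ a)) :
    (∀ m : ℕ, a - 1 < (m : ℝ) →
      ∑' n : ℕ, coxWeight Λ (m + 1 + n) ≤
        (∫ ω, Λ ω ^ a) * Real.Gamma ((m : ℝ) - a + 1) / Real.Gamma ((m : ℝ) + 1)) ∧
    ∃ C > (0 : ℝ), ∃ m₀ : ℕ, ∀ m : ℕ, m₀ ≤ m →
      ∑' n : ℕ, coxWeight Λ (m + 1 + n) ≤ C * (m : ℝ) ^ (-a) :=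
  stmt_16_general Λ hmeas hpos a ha hmom
end
end

section
/- Let p ≥ 2, μ ∈ S^{p-1}, ξ ∈ S^{p-1} with μᵀξ = 0, and δ ∈ (−1,1). Let g₁ : [−1,1] → ℝ₊ be a continuous strictly increasing nonnegative function. For t ∈ [−1,1] set x_t = t μ + √(1 − t²) ξ ∈ S^{p-1} and h(t) = ∫_{{x₁ ∈ S^{p-1} : x_tᵀ x₁ ≥ δ}} g₁(μᵀ x₁) dx₁. Then h is strictly increasing on [−1,1]: for all −1 ≤ t < t' ≤ 1 one has h(t) < h(t'). -/
open MeasureTheory Set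
open scoped RealInnerProductSpace

noncomputable section

/-!
Write `a = x_t` and `b = x_{t'}`. The reflection `R` in the hyperplane bisecting `a` and `b` is a
linear isometry, so it preserves the surface measure, and it exchanges the caps `C_a` and `C_b`;
in particular it maps `C_a \ C_b` onto `C_b \ C_a`. Since `μᵀa = t < t' = μᵀb`, the normal `a - b`
of that hyperplane points away from `μ`, so `R` strictly increases `μᵀx` on `C_a \ C_b`, hence also
`g₁(μᵀx)`. The open set `{bᵀx < δ < aᵀx} ⊆ C_a \ C_b` contains a point of the great circle
through `μ` and `ξ`, so `C_a \ C_b` has positive measure and `h(t) < h(t')`.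
-/

open Real
open scoped Pointwise

theorem Real.exists_cos_sub_lt_lt_cos_sub {α β δ : ℝ} (hβα : β < α) (hαβ : α - β < 2 * π)
    (hδ : δ ∈ Ioo (-1 : ℝ) 1) : ∃ θ, cos (θ - β) < δ ∧ δ < cos (θ - α) := by
  set d := arccos δ
  have hd : cos d = δ := cos_arccos hδ.1.le hδ.2.le
  have hd0 : 0 < d := arccos_pos.2 hδ.2
  have hdπ : d < π := arccos_lt_pi.2 hδ.1
  set γ := α - β
  -- `θ - α` has to lie in `(-d, d)` and `θ - β = θ - α + γ` in `(d, 2π - d)`.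
  obtain ⟨φ, hφ₁, hφ₂⟩ : ∃ φ, max (-d) (d - γ) < φ ∧ φ < min d (2 * π - d - γ) :=
    exists_between <|
      max_lt (lt_min (by linarith) (by linarith)) (lt_min (by linarith) (by linarith))
  refine ⟨α + φ, ?_, ?_⟩
  · rw [show α + φ - β = φ + γ by ring, ← hd]
    rcases le_or_gt (φ + γ) π with h | h
    · exact cos_lt_cos_of_nonneg_of_le_pi hd0.le h (by linarith [le_max_right (-d) (d - γ)])
    · rw [← cos_two_pi_sub]
      exact cos_lt_cos_of_nonneg_of_le_pi hd0.le (by linarith)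
        (by linarith [min_le_right d (2 * π - d - γ)])
  · rw [add_sub_cancel_left, ← cos_abs, ← hd]
    exact cos_lt_cos_of_nonneg_of_le_pi (abs_nonneg _) hdπ.le
      (abs_lt.2 ⟨by linarith [le_max_left (-d) (d - γ)],
        by linarith [min_le_left d (2 * π - d - γ)]⟩)

theorem MeasureTheory.setIntegral_lt_setIntegral_of_swap {X : Type*} [MeasurableSpace X]
    {ν : Measure X} {S : X → X} (hS : MeasurePreserving S ν ν) (hSe : MeasurableEmbedding S)
    {A B : Set X} (hA : MeasurableSet A) (hB : MeasurableSet B)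
    (hswap : S ⁻¹' (B \ A) = A \ B) {f : X → ℝ} (hf : Integrable f ν)
    (hlt : ∀ x ∈ A \ B, f x < f (S x)) (hpos : ν (A \ B) ≠ 0) :
    ∫ x in A, f x ∂ν < ∫ x in B, f x ∂ν := by
  have hfS : Integrable (fun x => f (S x)) ν := (hS.integrable_comp_emb hSe).mpr hf
  have hdiff : ∫ x in A \ B, f x ∂ν < ∫ x in A \ B, f (S x) ∂ν := by
    rw [← sub_pos, ← integral_sub hfS.integrableOn hf.integrableOn]
    refine (setIntegral_pos_iff_support_of_nonneg_ae ?_ (hfS.sub hf).integrableOn).2 ?_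
    · exact (ae_restrict_mem (hA.diff hB)).mono fun x hx => (sub_pos.2 (hlt x hx)).le
    · exact (pos_iff_ne_zero.2 hpos).trans_le
        (measure_mono fun x hx => ⟨(sub_pos.2 (hlt x hx)).ne', hx⟩)
  calc ∫ x in A, f x ∂ν = ∫ x in A ∩ B, f x ∂ν + ∫ x in A \ B, f x ∂ν :=
        (integral_inter_add_sdiff hB hf.integrableOn).symm
    _ < ∫ x in B ∩ A, f x ∂ν + ∫ x in B \ A, f x ∂ν := by
        rw [inter_comm, ← hS.setIntegral_preimage_emb hSe f (B \ A), hswap]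
        exact add_lt_add_right hdiff _
    _ = ∫ x in B, f x ∂ν := integral_inter_add_sdiff hA hf.integrableOn

section InnerProductSpace

variable {E : Type*} [NormedAddCommGroup E] [InnerProductSpace ℝ E]

lemma inner_cos_smul_add_sin_smul {μ ξ : E} (hμ : ‖μ‖ = 1) (hξ : ‖ξ‖ = 1) (hμξ : ⟪μ, ξ⟫ = 0)
    (α θ : ℝ) :
    ⟪cos α • μ + sin α • ξ, cos θ • μ + sin θ • ξ⟫ = cos (θ - α) := by
  simp only [inner_add_left, inner_add_right, real_inner_smul_left, real_inner_smul_right,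
    real_inner_self_eq_norm_sq, hμ, hξ, hμξ, real_inner_comm μ ξ, cos_sub]
  ring

lemma norm_cos_smul_add_sin_smul {μ ξ : E} (hμ : ‖μ‖ = 1) (hξ : ‖ξ‖ = 1) (hμξ : ⟪μ, ξ⟫ = 0)
    (θ : ℝ) :
    ‖cos θ • μ + sin θ • ξ‖ = 1 := by
  rw [norm_eq_sqrt_real_inner, inner_cos_smul_add_sin_smul hμ hξ hμξ, sub_self, cos_zero, sqrt_one]

lemma inner_cos_smul_add_sin_smul_right {μ ξ : E} (hμ : ‖μ‖ = 1) (hμξ : ⟪μ, ξ⟫ = 0) (θ : ℝ) :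
    ⟪μ, cos θ • μ + sin θ • ξ⟫ = cos θ := by
  simp [inner_add_right, real_inner_smul_right, hμ, hμξ]

lemma cos_arccos_smul_add_sin_arccos_smul {μ ξ : E} {t : ℝ} (ht₁ : -1 ≤ t) (ht₂ : t ≤ 1) :
    cos (arccos t) • μ + sin (arccos t) • ξ = t • μ + √(1 - t ^ 2) • ξ := by
  rw [cos_arccos ht₁ ht₂, sin_arccos]

lemma inner_reflection_sub {a b : E} (h : ‖a‖ = ‖b‖) (x : E) :
    ⟪a, (ℝ ∙ (a - b))ᗮ.reflection x⟫ = ⟪b, x⟫ := by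
  rw [← LinearIsometryEquiv.inner_map_map (ℝ ∙ (a - b))ᗮ.reflection, Submodule.reflection_sub h,
    Submodule.reflection_reflection]

lemma inner_lt_inner_reflection_orthogonal_singleton {u x μ : E} (hx : 0 < ⟪u, x⟫)
    (hμ : ⟪μ, u⟫ < 0) :
    ⟪μ, x⟫ < ⟪μ, (ℝ ∙ u)ᗮ.reflection x⟫ := by
  have hu : 0 < ‖u‖ := norm_pos_iff.2 (by rintro rfl; simp at hx)
  rw [Submodule.reflection_orthogonal_apply, Submodule.reflection_singleton_apply]
  simp only [inner_neg_right, inner_sub_right, two_smul, inner_add_right, real_inner_smul_right,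
    RCLike.ofReal_real_eq_id, id]
  have := mul_neg_of_pos_of_neg (div_pos hx (pow_pos hu 2)) hμ
  linarith

def LinearIsometryEquiv.sphereHomeomorph (f : E ≃ₗᵢ[ℝ] E) :
    Metric.sphere (0 : E) 1 ≃ₜ Metric.sphere (0 : E) 1 :=
  f.toHomeomorph.subtype fun x => by simp

@[simp]
lemma LinearIsometryEquiv.coe_sphereHomeomorph (f : E ≃ₗᵢ[ℝ] E) (x : Metric.sphere (0 : E) 1) :
    (f.sphereHomeomorph x : E) = f x :=
  rfl

variable [FiniteDimensional ℝ E] [MeasurableSpace E] [BorelSpace E]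

lemma LinearIsometryEquiv.measurePreserving_sphereHomeomorph (f : E ≃ₗᵢ[ℝ] E) :
    MeasurePreserving f.sphereHomeomorph (volume : Measure E).toSphere
      (volume : Measure E).toSphere := by
  have hF := f.sphereHomeomorph.continuous.measurable
  refine ⟨hF, Measure.ext fun s hs => ?_⟩
  rw [Measure.map_apply hF hs, Measure.toSphere_apply' _ hs, Measure.toSphere_apply' _ (hF hs),
    ← f.sphereHomeomorph.image_symm, image_image]
  have hcoe : Ioo (0 : ℝ) 1 • ((fun x => ↑(f.sphereHomeomorph.symm x)) '' s : Set E) =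
      f.symm '' (Ioo (0 : ℝ) 1 • ((↑) '' s)) := by
    rw [← image2_smul, ← image2_smul, image_image2_distrib_right fun r x => f.symm.map_smul r x,
      image_image]
    rfl
  rw [hcoe, f.symm.image_eq_preimage_symm, LinearIsometryEquiv.symm_symm]
  exact congrArg _
    (f.measurePreserving.measure_preimage_equiv (f := f.toHomeomorph.toMeasurableEquiv) _)

theorem setIntegral_cap_lt_setIntegral_cap {a b μ : E} (hab : ‖a‖ = ‖b‖)
    (hμab : ⟪μ, a⟫ < ⟪μ, b⟫) (hμ : ‖μ‖ = 1) {δ : ℝ}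
    (hsep : ∃ x ∈ Metric.sphere (0 : E) 1, ⟪b, x⟫ < δ ∧ δ < ⟪a, x⟫)
    {g : ℝ → ℝ} (hc : ContinuousOn g (Icc (-1) 1)) (hm : StrictMonoOn g (Icc (-1) 1)) :
    ∫ x in {x : Metric.sphere (0 : E) 1 | δ ≤ ⟪a, (x : E)⟫}, g ⟪μ, (x : E)⟫
        ∂(volume : Measure E).toSphere <
      ∫ x in {x : Metric.sphere (0 : E) 1 | δ ≤ ⟪b, (x : E)⟫}, g ⟪μ, (x : E)⟫
        ∂(volume : Measure E).toSphere := by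
  set R := (ℝ ∙ (a - b))ᗮ.reflection
  have hinner (c : E) : Continuous fun x : Metric.sphere (0 : E) 1 => ⟪c, (x : E)⟫ :=
    continuous_const.inner continuous_subtype_val
  have hcap (c : E) : MeasurableSet {x : Metric.sphere (0 : E) 1 | δ ≤ ⟪c, (x : E)⟫} :=
    (isClosed_le continuous_const (hinner c)).measurableSet
  have hRa (x : E) : ⟪a, R x⟫ = ⟪b, x⟫ := inner_reflection_sub hab x
  have hRb (x : E) : ⟪b, R x⟫ = ⟪a, x⟫ := by rw [← hRa, Submodule.reflection_reflection]
  have hrange (x : Metric.sphere (0 : E) 1) : ⟪μ, (x : E)⟫ ∈ Icc (-1) 1 :=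
    abs_le.1 <| by simpa [hμ] using abs_real_inner_le_norm μ x
  refine setIntegral_lt_setIntegral_of_swap R.measurePreserving_sphereHomeomorph
    R.sphereHomeomorph.measurableEmbedding (hcap a) (hcap b) ?_
    ((hc.comp_continuous (hinner μ) hrange).integrable_of_hasCompactSupport
      (HasCompactSupport.of_compactSpace _)) ?_ ?_
  · ext x
    simp [hRa, hRb]
  · rintro x ⟨hxa, hxb⟩
    refine hm (hrange x) (hrange _) (inner_lt_inner_reflection_orthogonal_singleton ?_ ?_)
    · simp only [mem_ofPred_eq, not_le] at hxa hxb
      rw [inner_sub_left]; linarith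
    · rw [inner_sub_right]; linarith
  · obtain ⟨x, hx, hbx, hax⟩ := hsep
    have hU : IsOpen {y : Metric.sphere (0 : E) 1 | δ < ⟪a, (y : E)⟫ ∧ ⟪b, (y : E)⟫ < δ} :=
      (isOpen_lt continuous_const (hinner a)).inter (isOpen_lt (hinner b) continuous_const)
    have hUne : {y : Metric.sphere (0 : E) 1 | δ < ⟪a, (y : E)⟫ ∧ ⟪b, (y : E)⟫ < δ}.Nonempty :=
      ⟨⟨x, hx⟩, hax, hbx⟩
    refine fun h => hU.measure_ne_zero _ hUne (measure_mono_null ?_ h)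
    exact fun y hy => ⟨hy.1.le, not_le.2 hy.2⟩

end InnerProductSpace

theorem stmt_17_general {p : ℕ} (μ ξ : Sph p)
    (hperp : ⟪(μ : EuclideanSpace ℝ (Fin p)), (ξ : EuclideanSpace ℝ (Fin p))⟫ = 0)
    (δ : ℝ) (hδ : δ ∈ Ioo (-1 : ℝ) 1) (g₁ : ℝ → ℝ)
    (hc : ContinuousOn g₁ (Icc (-1 : ℝ) 1)) (hm : StrictMonoOn g₁ (Icc (-1 : ℝ) 1))
    (t t' : ℝ) (ht : -1 ≤ t) (htt' : t < t') (ht' : t' ≤ 1) :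
    (∫ x in {x : Sph p | δ ≤
          ⟪t • (μ : EuclideanSpace ℝ (Fin p)) +
              Real.sqrt (1 - t ^ 2) • (ξ : EuclideanSpace ℝ (Fin p)),
            (x : EuclideanSpace ℝ (Fin p))⟫},
        g₁ (cosAngle μ x) ∂(sphMeasure p)) <
      ∫ x in {x : Sph p | δ ≤
          ⟪t' • (μ : EuclideanSpace ℝ (Fin p)) +
              Real.sqrt (1 - t' ^ 2) • (ξ : EuclideanSpace ℝ (Fin p)),
            (x : EuclideanSpace ℝ (Fin p))⟫},
        g₁ (cosAngle μ x) ∂(sphMeasure p) := by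
  have hμ : ‖(μ : EuclideanSpace ℝ (Fin p))‖ = 1 := norm_eq_of_mem_sphere μ
  have hξ : ‖(ξ : EuclideanSpace ℝ (Fin p))‖ = 1 := norm_eq_of_mem_sphere ξ
  have ht₁ : t ≤ 1 := htt'.le.trans ht'
  have ht'₁ : -1 ≤ t' := ht.trans htt'.le
  have hangle : arccos t' < arccos t := strictAntiOn_arccos ⟨ht, ht₁⟩ ⟨ht'₁, ht'⟩ htt'
  obtain ⟨θ, hb, ha⟩ := exists_cos_sub_lt_lt_cos_sub hangle
    (by linarith [arccos_le_pi t, arccos_nonneg t', pi_pos]) hδ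
  rw [← cos_arccos_smul_add_sin_arccos_smul ht ht₁,
    ← cos_arccos_smul_add_sin_arccos_smul ht'₁ ht']
  refine setIntegral_cap_lt_setIntegral_cap ?_ ?_ hμ
    ⟨cos θ • μ + sin θ • ξ, ?_, ?_, ?_⟩ hc hm
  · rw [norm_cos_smul_add_sin_smul hμ hξ hperp, norm_cos_smul_add_sin_smul hμ hξ hperp]
  · rwa [inner_cos_smul_add_sin_smul_right hμ hperp, inner_cos_smul_add_sin_smul_right hμ hperp,
      cos_arccos ht ht₁, cos_arccos ht'₁ ht']
  · simpa using norm_cos_smul_add_sin_smul hμ hξ hperp θ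
  · rwa [inner_cos_smul_add_sin_smul hμ hξ hperp]
  · rwa [inner_cos_smul_add_sin_smul hμ hξ hperp]

/-- monotonicity of the cap integral. For `μ ⊥ ξ` unit vectors,
`δ ∈ (-1,1)`, `g₁` continuous, strictly increasing and nonnegative on `[-1,1]`, and
`x_t = t μ + √(1-t²) ξ`, the function
`h(t) = ∫_{{x₁ : x_tᵀx₁ ≥ δ}} g₁(μᵀx₁) dx₁` is strictly increasing on `[-1,1]`. -/
theorem stmt_17 {p : ℕ} (hp : 2 ≤ p) (μ ξ : Sph p)
    (hperp : ⟪(μ : EuclideanSpace ℝ (Fin p)), (ξ : EuclideanSpace ℝ (Fin p))⟫ = 0)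
    (δ : ℝ) (hδ : δ ∈ Ioo (-1 : ℝ) 1) (g₁ : ℝ → ℝ)
    (hc : ContinuousOn g₁ (Icc (-1 : ℝ) 1)) (hm : StrictMonoOn g₁ (Icc (-1 : ℝ) 1))
    (hnn : ∀ t ∈ Icc (-1 : ℝ) 1, 0 ≤ g₁ t)
    (t t' : ℝ) (ht : -1 ≤ t) (htt' : t < t') (ht' : t' ≤ 1) :
    (∫ x in {x : Sph p | δ ≤
          ⟪t • (μ : EuclideanSpace ℝ (Fin p)) +
              Real.sqrt (1 - t ^ 2) • (ξ : EuclideanSpace ℝ (Fin p)),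
            (x : EuclideanSpace ℝ (Fin p))⟫},
        g₁ (cosAngle μ x) ∂(sphMeasure p)) <
      ∫ x in {x : Sph p | δ ≤
          ⟪t' • (μ : EuclideanSpace ℝ (Fin p)) +
              Real.sqrt (1 - t' ^ 2) • (ξ : EuclideanSpace ℝ (Fin p)),
            (x : EuclideanSpace ℝ (Fin p))⟫},
        g₁ (cosAngle μ x) ∂(sphMeasure p) :=
  stmt_17_general μ ξ hperp δ hδ g₁ hc hm t t' ht htt' ht'
end
end

section
/- Let p ≥ 2, μ ∈ S^{p-1}, ξ ∈ S^{p-1} with μᵀξ = 0, and let −1 ≤ t < t' ≤ 1. Set x_t = t μ + √(1 − t²) ξ and x_{t'} = t' μ + √(1 − t'²) ξ, and assume 1 + x_tᵀ x_{t'} > 0. Let R = ((x_t + x_{t'})(x_t + x_{t'})ᵀ)/(1 + x_tᵀ x_{t'}) − I_p be the reflection across the axis directed by x_t + x_{t'} (which satisfies R = Rᵀ, R² = I_p, R x_t = x_{t'} and R x_{t'} = x_t). Then for every x₁ ∈ S^{p-1} such that x_tᵀ x₁ > x_{t'}ᵀ x₁, the reflected point u₁ = R x₁ satisfies μᵀ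 u₁ > μᵀ x₁. -/
open scoped RealInnerProductSpace

noncomputable section

set_option maxHeartbeats 1000000 in
/-- reflection increases the tangent part. Let `μ ⊥ ξ` be unit vectors in
`ℝᵖ`, `-1 ≤ t < t' ≤ 1`, `x_t = t μ + √(1-t²) ξ`, `x_{t'} = t' μ + √(1-t'²) ξ`, with
`1 + x_tᵀx_{t'} > 0`, and let `R = ((x_t+x_{t'})(x_t+x_{t'})ᵀ)/(1 + x_tᵀx_{t'}) - I` be
the reflection across the axis directed by `x_t + x_{t'}` (so `R x₁ =
(⟪x_t+x_{t'}, x₁⟫/(1 + ⟪x_t, x_{t'}⟫)) • (x_t+x_{t'}) - x₁`). Then for every unit vector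
`x₁` with `x_tᵀx₁ > x_{t'}ᵀx₁`, the reflected point `u₁ = R x₁` satisfies
`μᵀu₁ > μᵀx₁`. -/
theorem stmt_18 {p : ℕ} (hp : 2 ≤ p) (μ ξ : EuclideanSpace ℝ (Fin p))
    (hμ : ‖μ‖ = 1) (hξ : ‖ξ‖ = 1) (hperp : ⟪μ, ξ⟫ = 0)
    (t t' : ℝ) (ht : -1 ≤ t) (htt' : t < t') (ht' : t' ≤ 1)
    (xt xt' : EuclideanSpace ℝ (Fin p))
    (hxt : xt = t • μ + Real.sqrt (1 - t ^ 2) • ξ)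
    (hxt' : xt' = t' • μ + Real.sqrt (1 - t' ^ 2) • ξ)
    (hposd : 0 < 1 + ⟪xt, xt'⟫)
    (x₁ : EuclideanSpace ℝ (Fin p)) (hx₁ : ‖x₁‖ = 1)
    (hgt : ⟪xt', x₁⟫ < ⟪xt, x₁⟫) :
    ⟪μ, x₁⟫ < ⟪μ, (⟪xt + xt', x₁⟫ / (1 + ⟪xt, xt'⟫)) • (xt + xt') - x₁⟫ := by

  set s := Real.sqrt (1 - t ^ 2) with hs_def
  set s' := Real.sqrt (1 - t' ^ 2) with hs'_def
  have hs : 0 ≤ s := Real.sqrt_nonneg _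
  have hs' : 0 ≤ s' := Real.sqrt_nonneg _
  have h1t : t ≤ 1 := le_trans htt'.le ht'
  have h1t' : -1 ≤ t' := le_trans ht htt'.le
  have hsq : s ^ 2 = 1 - t ^ 2 := Real.sq_sqrt (by nlinarith)
  have hsq' : s' ^ 2 = 1 - t' ^ 2 := Real.sq_sqrt (by nlinarith)
  have hμμ : ⟪μ, μ⟫ = 1 := by
    rw [real_inner_self_eq_norm_sq, hμ]; norm_num
  have hξξ : ⟪ξ, ξ⟫ = 1 := by
    rw [real_inner_self_eq_norm_sq, hξ]; norm_num
  have hperp' : ⟪ξ, μ⟫ = 0 := by rw [real_inner_comm]; exact hperp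
  set a := ⟪μ, x₁⟫ with ha_def
  set b := ⟪ξ, x₁⟫ with hb_def
  have hμxt : ⟪μ, xt⟫ = t := by
    rw [hxt, inner_add_right, real_inner_smul_right, real_inner_smul_right, hμμ, hperp]
    ring
  have hμxt' : ⟪μ, xt'⟫ = t' := by
    rw [hxt', inner_add_right, real_inner_smul_right, real_inner_smul_right, hμμ, hperp]
    ring
  have hxtx : ⟪xt, x₁⟫ = t * a + s * b := by
    rw [hxt, inner_add_left, real_inner_smul_left, real_inner_smul_left]
  have hxtx' : ⟪xt', x₁⟫ = t' * a + s' * b := by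
    rw [hxt', inner_add_left, real_inner_smul_left, real_inner_smul_left]
  have hd : ⟪xt, xt'⟫ = t * t' + s * s' := by
    rw [hxt, hxt', inner_add_left, inner_add_right, inner_add_right,
      real_inner_smul_left, real_inner_smul_left, real_inner_smul_left,
      real_inner_smul_left, real_inner_smul_right, real_inner_smul_right,
      real_inner_smul_right, real_inner_smul_right, hμμ, hξξ, hperp, hperp']
    ring
  rw [hd] at hposd
  have hss : 0 < s + s' := by
    rcases hs.lt_or_eq with h | h
    · linarith
    rcases hs'.lt_or_eq with h' | h'
    · linarith
    exfalso
    have e1 : (1 : ℝ) - t ^ 2 = 0 := by rw [← hsq, ← h]; ring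
    have e2 : (1 : ℝ) - t' ^ 2 = 0 := by rw [← hsq', ← h']; ring
    have hm : (t - 1) * (t + 1) = 0 := by linear_combination -e1
    have hm' : (t' - 1) * (t' + 1) = 0 := by linear_combination -e2
    have ht1 : t = -1 := by
      rcases mul_eq_zero.mp hm with hc | hc
      · linarith
      · linarith
    have ht1' : t' = 1 := by
      rcases mul_eq_zero.mp hm' with hc | hc
      · linarith
      · linarith
    rw [ht1, ht1', ← h, ← h'] at hposd
    norm_num at hposd
  rw [hxtx, hxtx'] at hgt
  have key : (s + s') * a < (t + t') * b := by
    have h3 : (s + s') * (t' * a + s' * b) < (s + s') * (t * a + s * b) :=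
      mul_lt_mul_of_pos_left hgt hss
    have h4 : (s ^ 2 - s' ^ 2) * b = (t' ^ 2 - t ^ 2) * b := by rw [hsq, hsq']; ring
    have h2 : (t' - t) * ((s + s') * a) < (t' - t) * ((t + t') * b) := by nlinarith [h3, h4]
    exact lt_of_mul_lt_mul_left h2 (by linarith)
  rw [inner_sub_right, real_inner_smul_right, inner_add_right, inner_add_left,
    hμxt, hμxt', hxtx, hxtx', hd, lt_sub_iff_add_lt, div_mul_eq_mul_div,
    lt_div_iff₀ hposd]
  have H : (s + s') * ((s + s') * a) < (s + s') * ((t + t') * b) :=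
    mul_lt_mul_of_pos_left key hss
  have e3 : s ^ 2 * a = (1 - t ^ 2) * a := by rw [hsq]
  have e4 : s' ^ 2 * a = (1 - t' ^ 2) * a := by rw [hsq']
  nlinarith [H, e3, e4]
end
end
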